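/- Let f : Ī → [0,∞) be continuous with f⁻¹({0}) = ∂I on a compact interval Ī = [a,b], f|_I FK-concave, normalized so max f = 1, and let u = log f on I. Then u is locally uniformly Lipschitz on compact subsets of I with Lipschitz bounds depending only on K and the distance to ∂I: |u'(t)| ≤ max{cot_K(t−a), cot_K(b−t)} wherever u is differentiable. Consequently, any sequence f_i of such normalized FK-concave functions on intervals Ī_i → Ī admits a subsequence converging locally uniformly on I to an FK-concave limit f_∞ : I → (0,∞). -/

import Mathlib

/-!
An `FK`-concave function lies above its `sn_K`-chords. If `f > 0` on `(a, b)`, this forces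
`b - a ≤ π / √K` (for `K > 0`), so `sn_K` is positive on `(0, b - a)`; letting the left end of a
chord run to `a` (resp. the right end to `b`) shows that `f t / sn_K (t - a)` decreases and
`f t / sn_K (b - t)` increases on `(a, b)`. Differentiating the logarithms of these two quotients
gives `-cot_K (b - t) ≤ u' t ≤ cot_K (t - a)`.

The same two monotonicity statements, together with `f ≤ 1 = f x₀`, bound `f` from below by a
multiple of `min (sn_K (t - a)) (sn_K (b - t))` and make `f` Lipschitz on `[c, d] ⊂ (a, b)` with a
constant depending only on `K`, `b - a` and the distance from `[c, d]` to the boundary. Along a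
sequence `fᵢ` these bounds hold uniformly for large `i`. A subsequence converging at the rational
points (compactness of `[0, 1]^ℚ`) is then uniformly Cauchy on each `[c, d]`, and the lower bound
and the chord inequalities pass to the limit.
-/

open Set Filter Topology

/-- `sn_K`: the solution of `v'' + Kv = 0`, `v(0) = 0`, `v'(0) = 1`. -/
noncomputable def snK (K t : ℝ) : ℝ :=
  if 0 < K then Real.sin (Real.sqrt K * t) / Real.sqrt K
  else if K = 0 then t
  else Real.sinh (Real.sqrt (-K) * t) / Real.sqrt (-K)

/-- The derivative `sn_K'`. -/
noncomputable def csK (K t : ℝ) : ℝ :=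
  if 0 < K then Real.cos (Real.sqrt K * t)
  else if K = 0 then 1
  else Real.cosh (Real.sqrt (-K) * t)

/-- The generalized cotangent `cot_K = sn_K'/sn_K`. -/
noncomputable def cotK (K t : ℝ) : ℝ := csK K t / snK K t

/-- The distortion coefficient `σ_K^(λ)(θ) = sn_K(λθ)/sn_K(θ)`. -/
noncomputable def sigmaK (K lam θ : ℝ) : ℝ := snK K (lam * θ) / snK K θ

/-- `FK`-concavity (`f'' + Kf ≤ 0`) in the comparison sense on the interior of `[a,b]`. -/
def FKConcaveOn (K a b : ℝ) (f : ℝ → ℝ) : Prop :=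
  ∀ s ∈ Set.Ioo a b, ∀ t ∈ Set.Ioo a b, s < t →
    (0 < K → t - s < Real.pi / Real.sqrt K) →
    ∀ lam ∈ Set.Icc (0:ℝ) 1,
      sigmaK K (1 - lam) (t - s) * f s + sigmaK K lam (t - s) * f t
        ≤ f ((1 - lam) * s + lam * t)

open Real
open scoped NNReal

lemma snK_pos {K x : ℝ} (hx : 0 < x) (hK : 0 < K → x < π / √K) :
    0 < snK K x := by
  unfold snK
  split_ifs with h₁ h₂
  · have hs := Real.sqrt_pos.2 h₁
    refine div_pos (Real.sin_pos_of_pos_of_lt_pi (by positivity) ?_) hs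
    rw [mul_comm, ← lt_div_iff₀ hs]
    exact hK h₁
  · exact hx
  · have hs : 0 < √(-K) := Real.sqrt_pos.2 (by linarith [lt_of_le_of_ne (not_lt.1 h₁) h₂])
    exact div_pos (Real.sinh_pos_iff.2 (by positivity)) hs

lemma snK_nonneg {K x : ℝ} (hx : 0 ≤ x) (hK : 0 < K → x ≤ π / √K) :
    0 ≤ snK K x := by
  unfold snK
  split_ifs with h₁ h₂
  · have hs := Real.sqrt_pos.2 h₁
    refine div_nonneg (Real.sin_nonneg_of_nonneg_of_le_pi (by positivity) ?_) hs.le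
    rw [mul_comm, ← le_div_iff₀ hs]
    exact hK h₁
  · exact hx
  · exact div_nonneg (Real.sinh_nonneg_iff.2 (by positivity)) (Real.sqrt_nonneg _)

lemma snK_pi_div_sqrt {K : ℝ} (hK : 0 < K) : snK K (π / √K) = 0 := by
  rw [snK, if_pos hK, mul_div_cancel₀ _ (Real.sqrt_pos.2 hK).ne', Real.sin_pi, zero_div]

lemma snK_of_pos {K : ℝ} (hK : 0 < K) :
    snK K = fun t => Real.sin (√K * t) / √K :=
  funext fun _ => if_pos hK

lemma snK_zero_left : snK 0 = id :=
  funext fun _ => by simp [snK]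

lemma snK_of_neg {K : ℝ} (hK : K < 0) :
    snK K = fun t => Real.sinh (√(-K) * t) / √(-K) :=
  funext fun _ => by rw [snK, if_neg hK.not_gt, if_neg hK.ne]

lemma hasDerivAt_snK (K x : ℝ) : HasDerivAt (snK K) (csK K x) x := by
  rcases lt_trichotomy K 0 with hK | rfl | hK
  · have hs : √(-K) ≠ 0 := (Real.sqrt_pos.2 (neg_pos.2 hK)).ne'
    rw [snK_of_neg hK, csK, if_neg hK.not_gt, if_neg hK.ne]
    exact (((hasDerivAt_id x).const_mul _).sinh.div_const _).congr_deriv (by field_simp; rfl)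
  · simpa [snK_zero_left, csK] using hasDerivAt_id x
  · have hs : √K ≠ 0 := (Real.sqrt_pos.2 hK).ne'
    rw [snK_of_pos hK, csK, if_pos hK]
    exact (((hasDerivAt_id x).const_mul _).sin.div_const _).congr_deriv (by field_simp; rfl)

lemma contDiff_snK (K : ℝ) : ContDiff ℝ 1 (snK K) := by
  rcases lt_trichotomy K 0 with hK | rfl | hK
  · rw [snK_of_neg hK]; fun_prop
  · rw [snK_zero_left]; exact contDiff_id
  · rw [snK_of_pos hK]; fun_prop

lemma continuous_snK (K : ℝ) : Continuous (snK K) := (contDiff_snK K).continuous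

lemma exists_lipschitzOnWith_snK (K : ℝ) {s : Set ℝ} (hs : IsCompact s) :
    ∃ C, LipschitzOnWith C (snK K) s :=
  LocallyLipschitzOn.exists_lipschitzOnWith_of_compact hs
    (contDiff_snK K).locallyLipschitz.locallyLipschitzOn

lemma exists_pos_le_snK {K δ L : ℝ} (hδ : 0 < δ) (hL : 0 < K → L < π / √K) :
    ∃ m > 0, ∀ x ∈ Icc δ L, m ≤ snK K x :=
  isCompact_Icc.exists_forall_le' (continuous_snK K).continuousOn fun _ hx =>
    snK_pos (hδ.trans_le hx.1) fun hK => hx.2.trans_lt (hL hK)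

lemma sigmaK_nonneg {K lam θ : ℝ} (hlam : lam ∈ Icc (0:ℝ) 1) (hθ : 0 < θ)
    (hθK : 0 < K → θ < π / √K) : 0 ≤ sigmaK K lam θ := by
  refine div_nonneg (snK_nonneg (mul_nonneg hlam.1 hθ.le) fun hK => ?_) (snK_pos hθ hθK).le
  nlinarith [hθK hK, hlam.2]

lemma snK_pos_of_lt_length {K a b θ : ℝ} (hlen : 0 < K → b - a ≤ π / √K)
    (hθ : 0 < θ) (hθb : θ < b - a) : 0 < snK K θ :=
  snK_pos hθ fun hK => hθb.trans_le (hlen hK)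

section FKConcave

variable {K a b : ℝ} {f : ℝ → ℝ}

lemma FKConcaveOn.comp_neg (hFK : FKConcaveOn K a b f) :
    FKConcaveOn K (-b) (-a) (fun t => f (-t)) := by
  intro s hs t ht hst hK lam hlam
  have h := hFK (-t) ⟨by linarith [ht.2], by linarith [ht.1]⟩ (-s)
    ⟨by linarith [hs.2], by linarith [hs.1]⟩ (by linarith) (fun hK' => by linarith [hK hK'])
    (1 - lam) ⟨by linarith [hlam.2], by linarith [hlam.1]⟩
  rw [sub_sub_cancel, neg_sub_neg,
    show lam * -t + (1 - lam) * -s = -((1 - lam) * s + lam * t) by ring] at h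
  show _ ≤ f (-((1 - lam) * s + lam * t))
  linarith

lemma FKConcaveOn.mul_snK_le_of_lt (hFK : FKConcaveOn K a b f) (hpos : ∀ t ∈ Ioo a b, 0 < f t)
    {s t t' : ℝ} (hs : a < s) (hst : s < t) (htt' : t < t') (ht' : t' < b)
    (hK : 0 < K → t' - s < π / √K) :
    f t' * snK K (t - s) ≤ f t * snK K (t' - s) := by
  have hθ : 0 < t' - s := by linarith
  set lam := (t - s) / (t' - s)
  have hlam : lam ∈ Icc (0:ℝ) 1 :=
    ⟨div_nonneg (by linarith) hθ.le, (div_le_one hθ).2 (by linarith)⟩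
  have hlamθ : lam * (t' - s) = t - s := div_mul_cancel₀ _ hθ.ne'
  have key := hFK s ⟨hs, by linarith⟩ t' ⟨by linarith, ht'⟩ (by linarith) hK lam hlam
  rw [show (1 - lam) * s + lam * t' = t by linear_combination hlamθ] at key
  have hrest : 0 ≤ sigmaK K (1 - lam) (t' - s) * f s :=
    mul_nonneg (sigmaK_nonneg ⟨by linarith [hlam.2], by linarith [hlam.1]⟩ hθ hK)
      (hpos s ⟨hs, by linarith⟩).le
  have hsn := snK_pos hθ hK
  calc f t' * snK K (t - s) = sigmaK K lam (t' - s) * f t' * snK K (t' - s) := by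
        rw [sigmaK, hlamθ]; field_simp
    _ ≤ f t * snK K (t' - s) := by gcongr; linarith

/-- Positive `FK`-concave functions live on intervals no longer than `π / √K`: across a longer
interval the chord inequality would force `f` to vanish at the point at distance `π / √K`. -/
lemma FKConcaveOn.length_le (hFK : FKConcaveOn K a b f) (hpos : ∀ t ∈ Ioo a b, 0 < f t)
    (hcont : ContinuousOn f (Ioo a b)) : 0 < K → b - a ≤ π / √K := by
  intro hK
  by_contra! hlong
  set P := π / √K
  have hP : 0 < P := div_pos Real.pi_pos (Real.sqrt_pos.2 hK)
  set s := a + (b - a - P) / 2 with hs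
  have hw : s + P ∈ Ioo a b := ⟨by linarith, by linarith⟩
  have hsa : a < s := by linarith
  have hlim : Tendsto (fun t' => f t' * snK K (s + P / 2 - s)) (𝓝[<] (s + P))
      (𝓝 (f (s + P) * snK K (s + P / 2 - s))) :=
    ((hcont.continuousAt (isOpen_Ioo.mem_nhds hw)).tendsto.mul_const _).mono_left
      nhdsWithin_le_nhds
  have hlim' : Tendsto (fun t' => f (s + P / 2) * snK K (t' - s)) (𝓝[<] (s + P))
      (𝓝 (f (s + P / 2) * snK K (s + P - s))) :=
    (((continuous_snK K).comp (continuous_sub_right s)).tendsto _).const_mul _ |>.mono_left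
      nhdsWithin_le_nhds
  have hle := le_of_tendsto_of_tendsto hlim hlim' <| by
    filter_upwards [Ioo_mem_nhdsLT (show s + P / 2 < s + P by linarith)] with t' ht'
    exact hFK.mul_snK_le_of_lt hpos (by linarith) (by linarith) ht'.1 (by linarith [ht'.2])
      fun _ => by linarith [ht'.2]
  rw [add_sub_cancel_left, add_sub_cancel_left, snK_pi_div_sqrt hK, mul_zero] at hle
  have := mul_pos (hpos _ hw) (snK_pos (K := K) (half_pos hP) fun _ => half_lt_self hP)
  linarith

lemma FKConcaveOn.mul_snK_sub_left_le (hFK : FKConcaveOn K a b f)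
    (hpos : ∀ t ∈ Ioo a b, 0 < f t) (hlen : 0 < K → b - a ≤ π / √K) {t t' : ℝ}
    (ht : a < t) (htt' : t ≤ t') (ht' : t' < b) :
    f t' * snK K (t - a) ≤ f t * snK K (t' - a) := by
  rcases htt'.eq_or_lt with rfl | htt'
  · rfl
  have hc : Continuous fun s => snK K (t - s) := (continuous_snK K).comp (continuous_sub_left t)
  have hc' : Continuous fun s => snK K (t' - s) := (continuous_snK K).comp (continuous_sub_left t')
  refine le_of_tendsto_of_tendsto (((hc.tendsto a).const_mul (f t')).mono_left
    (nhdsWithin_le_nhds (s := Ioi a))) (((hc'.tendsto a).const_mul (f t)).mono_left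
    nhdsWithin_le_nhds) ?_
  filter_upwards [Ioo_mem_nhdsGT ht] with s hs
  exact hFK.mul_snK_le_of_lt hpos hs.1 hs.2 htt' ht' fun hK => by linarith [hlen hK, hs.1]

lemma FKConcaveOn.mul_snK_sub_right_le (hFK : FKConcaveOn K a b f)
    (hpos : ∀ t ∈ Ioo a b, 0 < f t) (hlen : 0 < K → b - a ≤ π / √K) {t t' : ℝ}
    (ht : a < t) (htt' : t ≤ t') (ht' : t' < b) :
    f t * snK K (b - t') ≤ f t' * snK K (b - t) := by
  have e : ∀ x y : ℝ, -x - -y = y - x := fun _ _ => by ring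
  simpa only [neg_neg, e] using hFK.comp_neg.mul_snK_sub_left_le
    (fun t ht => hpos (-t) ⟨by linarith [ht.2], by linarith [ht.1]⟩)
    (by simpa only [e] using hlen) (neg_lt_neg ht') (neg_le_neg htt') (neg_lt_neg ht)

lemma FKConcaveOn.antitoneOn_log_sub_log_snK_sub_left
    (hFK : FKConcaveOn K a b f) (hpos : ∀ t ∈ Ioo a b, 0 < f t)
    (hlen : 0 < K → b - a ≤ π / √K) :
    AntitoneOn (fun t => Real.log (f t) - Real.log (snK K (t - a))) (Ioo a b) := by
  intro x hx y hy hxy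
  have hsx := snK_pos_of_lt_length hlen (sub_pos.2 hx.1) (by linarith [hx.2])
  have hsy := snK_pos_of_lt_length hlen (sub_pos.2 hy.1) (by linarith [hy.2])
  have h := Real.log_le_log (mul_pos (hpos y hy) hsx)
    (hFK.mul_snK_sub_left_le hpos hlen hx.1 hxy hy.2)
  rw [Real.log_mul (hpos y hy).ne' hsx.ne', Real.log_mul (hpos x hx).ne' hsy.ne'] at h
  linarith

lemma FKConcaveOn.monotoneOn_log_sub_log_snK_sub_right
    (hFK : FKConcaveOn K a b f) (hpos : ∀ t ∈ Ioo a b, 0 < f t)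
    (hlen : 0 < K → b - a ≤ π / √K) :
    MonotoneOn (fun t => Real.log (f t) - Real.log (snK K (b - t))) (Ioo a b) := by
  intro x hx y hy hxy
  have hsx := snK_pos_of_lt_length hlen (sub_pos.2 hx.2) (by linarith [hx.1])
  have hsy := snK_pos_of_lt_length hlen (sub_pos.2 hy.2) (by linarith [hy.1])
  have h := Real.log_le_log (mul_pos (hpos x hx) hsy)
    (hFK.mul_snK_sub_right_le hpos hlen hx.1 hxy hy.2)
  rw [Real.log_mul (hpos x hx).ne' hsy.ne', Real.log_mul (hpos y hy).ne' hsx.ne'] at h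
  linarith

lemma FKConcaveOn.abs_deriv_log_le (hFK : FKConcaveOn K a b f) (hpos : ∀ t ∈ Ioo a b, 0 < f t)
    (hlen : 0 < K → b - a ≤ π / √K) {t : ℝ} (ht : t ∈ Ioo a b)
    (hdiff : DifferentiableAt ℝ (fun s => Real.log (f s)) t) :
    |deriv (fun s => Real.log (f s)) t| ≤ max (cotK K (t - a)) (cotK K (b - t)) := by
  have hacc : AccPt t (𝓟 (Ioo a b)) := isOpen_Ioo.preperfect t ht
  have hl : HasDerivAt (fun s => Real.log (snK K (s - a))) (cotK K (t - a)) t :=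
    ((hasDerivAt_snK K _).comp_sub_const t a).log
      (snK_pos_of_lt_length hlen (sub_pos.2 ht.1) (by linarith [ht.2])).ne'
  have hr : HasDerivAt (fun s => Real.log (snK K (b - s))) (-cotK K (b - t)) t := by
    simpa only [cotK, neg_div] using ((hasDerivAt_snK K _).comp_const_sub b t).log
      (snK_pos_of_lt_length hlen (sub_pos.2 ht.2) (by linarith [ht.1])).ne'
  have h₁ := (hdiff.hasDerivAt.sub hl).hasDerivWithinAt.nonpos_of_antitoneOn hacc
    (hFK.antitoneOn_log_sub_log_snK_sub_left hpos hlen)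
  have h₂ := (hdiff.hasDerivAt.sub hr).hasDerivWithinAt.nonneg_of_monotoneOn hacc
    (hFK.monotoneOn_log_sub_log_snK_sub_right hpos hlen)
  rw [abs_le]
  constructor <;> linarith [le_max_left (cotK K (t - a)) (cotK K (b - t)),
    le_max_right (cotK K (t - a)) (cotK K (b - t))]

end FKConcave

structure IsNormalizedFKConcave (K a b : ℝ) (f : ℝ → ℝ) : Prop where
  pos : ∀ t ∈ Ioo a b, 0 < f t
  le_one : ∀ t ∈ Ioo a b, f t ≤ 1
  exists_eq_one : ∃ x ∈ Ioo a b, f x = 1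
  fkConcaveOn : FKConcaveOn K a b f
  length_le : 0 < K → b - a ≤ π / √K

namespace IsNormalizedFKConcave

variable {K a b : ℝ} {f : ℝ → ℝ}

lemma of_continuousOn (hc : ContinuousOn f (Icc a b)) (h0 : f a = 0 ∧ f b = 0)
    (hpos : ∀ t ∈ Ioo a b, 0 < f t)
    (hnorm : (∀ t ∈ Icc a b, f t ≤ 1) ∧ ∃ t ∈ Icc a b, f t = 1) (hFK : FKConcaveOn K a b f) :
    IsNormalizedFKConcave K a b f where
  pos := hpos
  le_one t ht := hnorm.1 t (Ioo_subset_Icc_self ht)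
  exists_eq_one := by
    obtain ⟨x, hx, hx1⟩ := hnorm.2
    refine ⟨x, ⟨hx.1.lt_of_ne ?_, hx.2.lt_of_ne ?_⟩, hx1⟩ <;> rintro rfl <;> simp_all
  fkConcaveOn := hFK
  length_le := hFK.length_le hpos (hc.mono Ioo_subset_Icc_self)

lemma comp_neg (hf : IsNormalizedFKConcave K a b f) :
    IsNormalizedFKConcave K (-b) (-a) (fun t => f (-t)) where
  pos t ht := hf.pos (-t) ⟨by linarith [ht.2], by linarith [ht.1]⟩
  le_one t ht := hf.le_one (-t) ⟨by linarith [ht.2], by linarith [ht.1]⟩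
  exists_eq_one := by
    obtain ⟨x, hx, hx1⟩ := hf.exists_eq_one
    exact ⟨-x, ⟨by linarith [hx.2], by linarith [hx.1]⟩, by rwa [neg_neg]⟩
  fkConcaveOn := hf.fkConcaveOn.comp_neg
  length_le := by simpa only [neg_sub_neg] using hf.length_le

lemma sub_le {C : ℝ≥0} (hf : IsNormalizedFKConcave K a b f)
    (hC : LipschitzOnWith C (snK K) (Icc 0 (b - a))) {m x y : ℝ} (hm : 0 < m)
    (hmx : m ≤ snK K (x - a)) (hx : a < x) (hxy : x ≤ y) (hy : y < b) :
    f y - f x ≤ C / m * (y - x) := by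
  have hfx : 0 ≤ f x ∧ f x ≤ 1 :=
    ⟨(hf.pos x ⟨hx, by linarith⟩).le, hf.le_one x ⟨hx, by linarith⟩⟩
  have hsn : snK K (y - a) - snK K (x - a) ≤ C * (y - x) := by
    have h := hC.dist_le_mul (y - a) ⟨by linarith, by linarith⟩ (x - a) ⟨by linarith, by linarith⟩
    rw [Real.dist_eq, Real.dist_eq, sub_sub_sub_cancel_right,
      abs_of_nonneg (sub_nonneg.2 hxy)] at h
    exact (le_abs_self _).trans h
  have hchord := hf.fkConcaveOn.mul_snK_sub_left_le hf.pos hf.length_le hx hxy hy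
  rw [div_mul_eq_mul_div, le_div_iff₀ hm]
  rcases le_or_gt (f y - f x) 0 with hneg | hpos
  · nlinarith [mul_nonneg C.2 (sub_nonneg.2 hxy)]
  calc (f y - f x) * m ≤ (f y - f x) * snK K (x - a) := by gcongr
    _ ≤ f x * (snK K (y - a) - snK K (x - a)) := by linarith
    _ ≤ f x * (C * (y - x)) := by gcongr; exact hfx.1
    _ ≤ C * (y - x) := mul_le_of_le_one_left (mul_nonneg C.2 (sub_nonneg.2 hxy)) hfx.2

lemma lipschitzOnWith {C : ℝ≥0} (hf : IsNormalizedFKConcave K a b f)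
    (hC : LipschitzOnWith C (snK K) (Icc 0 (b - a))) {m c d : ℝ} (hm : 0 < m)
    (hcd : Icc c d ⊆ Ioo a b) (hsn : ∀ x ∈ Icc c d, m ≤ snK K (x - a) ∧ m ≤ snK K (b - x)) :
    LipschitzOnWith (C / m.toNNReal) f (Icc c d) := by
  have hC' : LipschitzOnWith C (snK K) (Icc 0 (-a - -b)) := by rwa [neg_sub_neg]
  have key : ∀ x ∈ Icc c d, ∀ y ∈ Icc c d, x ≤ y → |f y - f x| ≤ C / m * (y - x) := by
    intro x hx y hy hxy
    refine abs_sub_le_iff.2 ⟨hf.sub_le hC hm (hsn x hx).1 (hcd hx).1 hxy (hcd hy).2, ?_⟩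
    have h := hf.comp_neg.sub_le hC' hm (by rw [sub_neg_eq_add, neg_add_eq_sub]; exact (hsn y hy).2)
      (neg_lt_neg (hcd hy).2) (neg_le_neg hxy) (neg_lt_neg (hcd hx).1)
    simpa only [neg_neg, neg_sub_neg] using h
  refine LipschitzOnWith.of_dist_le_mul fun x hx y hy => ?_
  rw [NNReal.coe_div, Real.coe_toNNReal _ hm.le, Real.dist_eq, Real.dist_eq]
  rcases le_total x y with hxy | hyx
  · rw [abs_sub_comm, abs_sub_comm x, abs_of_nonneg (sub_nonneg.2 hxy)]
    exact key x hx y hy hxy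
  · rw [abs_of_nonneg (sub_nonneg.2 hyx)]
    exact key y hy x hx hyx

lemma min_snK_le_mul (hf : IsNormalizedFKConcave K a b f) {M : ℝ}
    (hM : ∀ θ ∈ Ioo 0 (b - a), snK K θ ≤ M) {t : ℝ} (ht : t ∈ Ioo a b) :
    min (snK K (t - a)) (snK K (b - t)) ≤ M * f t := by
  obtain ⟨x, hx, hx1⟩ := hf.exists_eq_one
  have hft := (hf.pos t ht).le
  rcases le_total t x with htx | hxt
  · have h := hf.fkConcaveOn.mul_snK_sub_left_le hf.pos hf.length_le ht.1 htx hx.2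
    rw [hx1, one_mul] at h
    calc min (snK K (t - a)) (snK K (b - t)) ≤ f t * snK K (x - a) := (min_le_left _ _).trans h
      _ ≤ f t * M := by gcongr; exact hM _ ⟨sub_pos.2 hx.1, by linarith [hx.2]⟩
      _ = M * f t := mul_comm _ _
  · have h := hf.fkConcaveOn.mul_snK_sub_right_le hf.pos hf.length_le hx.1 hxt ht.2
    rw [hx1, one_mul] at h
    calc min (snK K (t - a)) (snK K (b - t)) ≤ f t * snK K (b - x) := (min_le_right _ _).trans h
      _ ≤ f t * M := by gcongr; exact hM _ ⟨sub_pos.2 hx.2, by linarith [hx.1]⟩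
      _ = M * f t := mul_comm _ _

end IsNormalizedFKConcave

section Tendsto

variable {ι : Type*} {l : Filter ι} {as bs : ι → ℝ} {K a b : ℝ}

lemma eventually_Icc_subset_Ioo (ha : Tendsto as l (𝓝 a)) (hb : Tendsto bs l (𝓝 b))
    {c d : ℝ} (hac : a < c) (hdb : d < b) : ∀ᶠ i in l, Icc c d ⊆ Ioo (as i) (bs i) := by
  filter_upwards [ha.eventually (eventually_lt_nhds hac), hb.eventually (eventually_gt_nhds hdb)]
    with i h₁ h₂
  exact fun x hx => ⟨h₁.trans_le hx.1, hx.2.trans_lt h₂⟩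

lemma length_le_of_tendsto [l.NeBot] (ha : Tendsto as l (𝓝 a)) (hb : Tendsto bs l (𝓝 b))
    (hlen : ∀ i, 0 < K → bs i - as i ≤ π / √K) :
    0 < K → b - a ≤ π / √K := fun hK =>
  le_of_tendsto (hb.sub ha) (Eventually.of_forall fun i => hlen i hK)

lemma exists_pos_eventually_le_snK (ha : Tendsto as l (𝓝 a)) (hb : Tendsto bs l (𝓝 b))
    (hlen : 0 < K → b - a ≤ π / √K) {c d : ℝ} (hac : a < c) (hdb : d < b) :
    ∃ m > 0, ∀ᶠ i in l, ∀ x ∈ Icc c d, m ≤ snK K (x - as i) ∧ m ≤ snK K (bs i - x) := by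
  obtain ⟨δ, hδ, hδcd⟩ := exists_between (lt_min (sub_pos.2 hac) (sub_pos.2 hdb))
  obtain ⟨L, hL, hLb⟩ := exists_between
    (max_lt (by linarith : d - a < b - a) (by linarith : b - c < b - a))
  rw [lt_min_iff] at hδcd
  rw [max_lt_iff] at hL
  obtain ⟨m, hm, hmL⟩ := exists_pos_le_snK (K := K) hδ fun hK => hLb.trans_le (hlen hK)
  refine ⟨m, hm, ?_⟩
  filter_upwards [(tendsto_const_nhds.sub ha).eventually (eventually_gt_nhds hδcd.1),
    (hb.sub tendsto_const_nhds).eventually (eventually_gt_nhds hδcd.2),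
    (tendsto_const_nhds.sub ha).eventually (eventually_lt_nhds hL.1),
    (hb.sub tendsto_const_nhds).eventually (eventually_lt_nhds hL.2)] with i h₁ h₂ h₃ h₄ x hx
  exact ⟨hmL _ ⟨by linarith [hx.1], by linarith [hx.2]⟩,
    hmL _ ⟨by linarith [hx.2], by linarith [hx.1]⟩⟩

lemma FKConcaveOn.of_tendsto [l.NeBot] {F : ι → ℝ → ℝ} {f : ℝ → ℝ}
    (ha : Tendsto as l (𝓝 a)) (hb : Tendsto bs l (𝓝 b))
    (hF : ∀ i, FKConcaveOn K (as i) (bs i) (F i))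
    (hlim : ∀ t ∈ Ioo a b, Tendsto (fun i => F i t) l (𝓝 (f t))) : FKConcaveOn K a b f := by
  intro s hs t ht hst hK lam hlam
  have hp : (1 - lam) * s + lam * t ∈ Icc s t :=
    (convex_Icc s t) (left_mem_Icc.2 hst.le) (right_mem_Icc.2 hst.le)
      (sub_nonneg.2 hlam.2) hlam.1 (sub_add_cancel 1 lam)
  refine le_of_tendsto_of_tendsto (((hlim s hs).const_mul _).add ((hlim t ht).const_mul _))
    (hlim _ ⟨hs.1.trans_le hp.1, hp.2.trans_lt ht.2⟩) ?_
  filter_upwards [eventually_Icc_subset_Ioo ha hb hs.1 ht.2] with i hi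
  exact hF i s (hi (left_mem_Icc.2 hst.le)) t (hi (right_mem_Icc.2 hst.le)) hst hK lam hlam

variable {fs : ι → ℝ → ℝ}

lemma eventually_mem_Icc_zero_one (ha : Tendsto as l (𝓝 a)) (hb : Tendsto bs l (𝓝 b))
    (hfs : ∀ i, IsNormalizedFKConcave K (as i) (bs i) (fs i)) {t : ℝ} (ht : t ∈ Ioo a b) :
    ∀ᶠ i in l, fs i t ∈ Icc (0:ℝ) 1 := by
  filter_upwards [eventually_Icc_subset_Ioo ha hb ht.1 ht.2] with i hi
  have hti := hi (left_mem_Icc.2 le_rfl)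
  exact ⟨((hfs i).pos t hti).le, (hfs i).le_one t hti⟩

lemma exists_eventually_lipschitzOnWith [l.NeBot] (ha : Tendsto as l (𝓝 a))
    (hb : Tendsto bs l (𝓝 b)) (hfs : ∀ i, IsNormalizedFKConcave K (as i) (bs i) (fs i))
    {c d : ℝ} (hac : a < c) (hdb : d < b) :
    ∃ C, ∀ᶠ i in l, LipschitzOnWith C (fs i) (Icc c d) := by
  obtain ⟨m, hm, hsn⟩ := exists_pos_eventually_le_snK ha hb
    (length_le_of_tendsto ha hb fun i => (hfs i).length_le) hac hdb
  obtain ⟨C, hC⟩ := exists_lipschitzOnWith_snK K (isCompact_Icc (a := 0) (b := b - a + 1))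
  refine ⟨C / m.toNNReal, ?_⟩
  filter_upwards [hsn, eventually_Icc_subset_Ioo ha hb hac hdb,
    (hb.sub ha).eventually (eventually_lt_nhds (lt_add_one (b - a)))] with i hsni hcd hlen
  exact (hfs i).lipschitzOnWith (hC.mono (Icc_subset_Icc_right hlen.le)) hm hcd hsni

lemma exists_pos_eventually_le [l.NeBot] (ha : Tendsto as l (𝓝 a))
    (hb : Tendsto bs l (𝓝 b)) (hfs : ∀ i, IsNormalizedFKConcave K (as i) (bs i) (fs i))
    {t : ℝ} (ht : t ∈ Ioo a b) : ∃ ε > 0, ∀ᶠ i in l, ε ≤ fs i t := by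
  obtain ⟨m, hm, hsn⟩ := exists_pos_eventually_le_snK ha hb
    (length_le_of_tendsto ha hb fun i => (hfs i).length_le) ht.1 ht.2
  obtain ⟨M, hM⟩ := (isCompact_Icc (a := 0) (b := b - a + 1)).bddAbove_image
    (continuous_snK K).continuousOn
  have hM₁ : 0 < max M 1 := lt_max_of_lt_right one_pos
  refine ⟨m / max M 1, div_pos hm hM₁, ?_⟩
  filter_upwards [hsn, eventually_Icc_subset_Ioo ha hb ht.1 ht.2,
    (hb.sub ha).eventually (eventually_lt_nhds (lt_add_one (b - a)))] with i hsni hcd hlen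
  have hti := left_mem_Icc.2 (le_refl t)
  have h := (hfs i).min_snK_le_mul (M := max M 1) (fun θ hθ =>
    (hM (mem_image_of_mem _ ⟨hθ.1.le, by linarith [hθ.2]⟩)).trans (le_max_left _ _)) (hcd hti)
  rw [div_le_iff₀ hM₁]
  linarith [le_min (hsni t hti).1 (hsni t hti).2]

end Tendsto

lemma exists_subseq_forall_tendsto {X : Type*} {S : Set X} (hS : S.Countable)
    {F : ℕ → X → ℝ} {m M : ℝ} (hmM : m ≤ M) (hF : ∀ x ∈ S, ∀ᶠ i in atTop, F i x ∈ Icc m M) :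
    ∃ φ : ℕ → ℕ, StrictMono φ ∧ ∀ x ∈ S, ∃ L, Tendsto (fun i => F (φ i) x) atTop (𝓝 L) := by
  have := hS.to_subtype
  obtain ⟨G, φ, hφ, hG⟩ := CompactSpace.tendsto_subseq fun i (x : S) => projIcc m M hmM (F i x)
  refine ⟨φ, hφ, fun x hx => ⟨G ⟨x, hx⟩, ?_⟩⟩
  refine ((continuous_subtype_val.tendsto _).comp (tendsto_pi_nhds.1 hG ⟨x, hx⟩)).congr' ?_
  filter_upwards [hφ.tendsto_atTop.eventually (hF x hx)] with i hi
  simp [projIcc_of_mem hmM hi]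

lemma uniformCauchySeqOn_of_lipschitzOnWith {X α : Type*} [PseudoMetricSpace X]
    [PseudoMetricSpace α] {F : ℕ → X → α} {S T : Set X} {C : ℝ≥0} (hS : IsCompact S)
    (hTS : T ⊆ S) (hST : S ⊆ closure T) (hT : ∀ x ∈ T, CauchySeq fun i => F i x)
    (hF : ∀ᶠ i in atTop, LipschitzOnWith C (F i) S) : UniformCauchySeqOn F atTop S := by
  intro u hu
  obtain ⟨ε, hε, hεu⟩ := Metric.mem_uniformity_dist.1 hu
  set δ := ε / 3 / (C + 1)
  have hδ : 0 < δ := by positivity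
  have hCδ : C * δ ≤ ε / 3 := by
    calc C * δ ≤ (C + 1) * δ := by gcongr; linarith
      _ = ε / 3 := mul_div_cancel₀ _ (by positivity)
  obtain ⟨T', hT'T, hT'fin, hcover⟩ := hS.elim_finite_subcover_image (b := T)
    (c := fun p => Metric.ball p δ) (fun _ _ => Metric.isOpen_ball) fun x hx => by
      obtain ⟨p, hp, hxp⟩ := Metric.mem_closure_iff.1 (hST hx) δ hδ
      exact mem_iUnion₂.2 ⟨p, hp, hxp⟩
  have hcauchy : ∀ᶠ n in atTop ×ˢ atTop, ∀ p ∈ T', dist (F n.1 p) (F n.2 p) < ε / 3 := by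
    refine (eventually_all_finite hT'fin).2 fun p hp => ?_
    have h := cauchySeq_iff_tendsto_dist_atTop_0.1 (hT p (hT'T hp))
    rw [← prod_atTop_atTop_eq] at h
    exact h.eventually (gt_mem_nhds (by positivity))
  filter_upwards [tendsto_fst.eventually hF, tendsto_snd.eventually hF, hcauchy]
    with n h₁ h₂ hn x hx
  apply hεu
  obtain ⟨p, hp, hxp⟩ := mem_iUnion₂.1 (hcover hx)
  have hpS := hTS (hT'T hp)
  have hxp' : dist x p ≤ δ := (Metric.mem_ball.1 hxp).le
  have hd₁ : dist (F n.1 x) (F n.1 p) ≤ C * δ := (h₁.dist_le_mul x hx p hpS).trans (by gcongr)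
  have hd₂ : dist (F n.2 p) (F n.2 x) ≤ C * δ :=
    (h₂.dist_le_mul p hpS x hx).trans (by rw [dist_comm]; gcongr)
  calc dist (F n.1 x) (F n.2 x)
      ≤ dist (F n.1 x) (F n.1 p) + dist (F n.1 p) (F n.2 p) + dist (F n.2 p) (F n.2 x) :=
        dist_triangle4 _ _ _ _
    _ < ε := by linarith [hn p hp]

theorem exists_subseq_tendstoLocallyUniformlyOn_Ioo {a b m M : ℝ} (hmM : m ≤ M)
    {F : ℕ → ℝ → ℝ} (hbdd : ∀ x ∈ Ioo a b, ∀ᶠ i in atTop, F i x ∈ Icc m M)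
    (hlip : ∀ c d, a < c → d < b → ∃ C, ∀ᶠ i in atTop, LipschitzOnWith C (F i) (Icc c d)) :
    ∃ φ : ℕ → ℕ, StrictMono φ ∧ ∃ F' : ℝ → ℝ,
      TendstoLocallyUniformlyOn (fun i => F (φ i)) F' atTop (Ioo a b) := by
  obtain ⟨φ, hφ, hconv⟩ := exists_subseq_forall_tendsto
    ((countable_range ((↑) : ℚ → ℝ)).mono inter_subset_right) hmM fun x hx => hbdd x hx.1
  have hunif : ∀ c d, a < c → c < d → d < b →
      UniformCauchySeqOn (fun i => F (φ i)) atTop (Icc c d) := by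
    intro c d hac hcd hdb
    obtain ⟨C, hC⟩ := hlip c d hac hdb
    refine uniformCauchySeqOn_of_lipschitzOnWith (T := Ioo c d ∩ range ((↑) : ℚ → ℝ))
      isCompact_Icc (inter_subset_left.trans Ioo_subset_Icc_self) ?_ (fun x hx => ?_)
      (hφ.tendsto_atTop.eventually hC)
    · rw [← closure_Ioo hcd.ne]
      exact closure_minimal (Rat.denseRange_cast.open_subset_closure_inter isOpen_Ioo)
        isClosed_closure
    · obtain ⟨L, hL⟩ := hconv x ⟨⟨hac.trans hx.1.1, hx.1.2.trans hdb⟩, hx.2⟩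
      exact hL.cauchySeq
  refine ⟨φ, hφ, fun t => limUnder atTop fun i => F (φ i) t,
    tendstoLocallyUniformlyOn_of_forall_exists_nhds fun x hx => ?_⟩
  obtain ⟨c, hac, hcx⟩ := exists_between hx.1
  obtain ⟨d, hxd, hdb⟩ := exists_between hx.2
  have h := hunif c d hac (hcx.trans hxd) hdb
  exact ⟨Icc c d, mem_nhdsWithin_of_mem_nhds (Icc_mem_nhds hcx hxd),
    h.tendstoUniformlyOn_of_tendsto fun y hy => (h.cauchySeq hy).tendsto_limUnder⟩

theorem stmt_19_general (K a b : ℝ) (f : ℝ → ℝ)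
    (hfc : ContinuousOn f (Icc a b))
    (hfpos : ∀ t ∈ Ioo a b, 0 < f t)
    (hFK : FKConcaveOn K a b f)
    (as bs : ℕ → ℝ)
    (ha : Tendsto as atTop (𝓝 a)) (hb : Tendsto bs atTop (𝓝 b))
    (fs : ℕ → ℝ → ℝ)
    (hfsc : ∀ i, ContinuousOn (fs i) (Icc (as i) (bs i)))
    (hfs0 : ∀ i, fs i (as i) = 0 ∧ fs i (bs i) = 0)
    (hfspos : ∀ i, ∀ t ∈ Ioo (as i) (bs i), 0 < fs i t)
    (hfsnorm : ∀ i, (∀ t ∈ Icc (as i) (bs i), fs i t ≤ 1) ∧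
      ∃ t ∈ Icc (as i) (bs i), fs i t = 1)
    (hFKs : ∀ i, FKConcaveOn K (as i) (bs i) (fs i)) :
    (∀ t ∈ Ioo a b, DifferentiableAt ℝ (fun s => Real.log (f s)) t →
      |deriv (fun s => Real.log (f s)) t| ≤ max (cotK K (t - a)) (cotK K (b - t))) ∧
    ∃ φ : ℕ → ℕ, StrictMono φ ∧ ∃ fL : ℝ → ℝ,
      (∀ t ∈ Ioo a b, 0 < fL t) ∧ FKConcaveOn K a b fL ∧
      ∀ J : Set ℝ, IsCompact J → J ⊆ Ioo a b →
        TendstoUniformlyOn (fun i => fs (φ i)) fL atTop J := by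
  refine ⟨fun t ht => hFK.abs_deriv_log_le hfpos
    (hFK.length_le hfpos (hfc.mono Ioo_subset_Icc_self)) ht, ?_⟩
  have hfs i : IsNormalizedFKConcave K (as i) (bs i) (fs i) :=
    .of_continuousOn (hfsc i) (hfs0 i) (hfspos i) (hfsnorm i) (hFKs i)
  obtain ⟨φ, hφ, fL, hfL⟩ := exists_subseq_tendstoLocallyUniformlyOn_Ioo zero_le_one
    (fun t ht => eventually_mem_Icc_zero_one ha hb hfs ht)
    fun c d hac hdb => exists_eventually_lipschitzOnWith ha hb hfs hac hdb
  have haφ := ha.comp hφ.tendsto_atTop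
  have hbφ := hb.comp hφ.tendsto_atTop
  have hlim : ∀ t ∈ Ioo a b, Tendsto (fun i => fs (φ i) t) atTop (𝓝 (fL t)) :=
    fun t ht => hfL.tendsto_at ht
  refine ⟨φ, hφ, fL, fun t ht => ?_, .of_tendsto haφ hbφ (fun i => hFKs (φ i)) hlim,
    fun J hJ hJab => (tendstoLocallyUniformlyOn_iff_forall_isCompact isOpen_Ioo).1 hfL J hJab hJ⟩
  obtain ⟨ε, hε, hev⟩ := exists_pos_eventually_le haφ hbφ (fun i => hfs (φ i)) ht
  exact hε.trans_le (ge_of_tendsto (hlim t ht) hev)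

/-- A continuous, normalized (`max f = 1`) `FK`-concave function `f : [a,b] → [0,∞)`
vanishing exactly on the boundary has `u = log f` locally Lipschitz on the interior,
with `|u'(t)| ≤ max{cot_K(t−a), cot_K(b−t)}` wherever `u` is differentiable; and every
sequence of such functions on intervals `[aᵢ,bᵢ] → [a,b]` has a subsequence converging
locally uniformly on `(a,b)` to an `FK`-concave positive limit. -/
theorem stmt_19 (K a b : ℝ) (hab : a < b) (f : ℝ → ℝ)
    (hfc : ContinuousOn f (Icc a b)) (hf0 : f a = 0 ∧ f b = 0)
    (hfpos : ∀ t ∈ Ioo a b, 0 < f t)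
    (hfnorm : (∀ t ∈ Icc a b, f t ≤ 1) ∧ ∃ t ∈ Icc a b, f t = 1)
    (hFK : FKConcaveOn K a b f)
    (as bs : ℕ → ℝ) (habs : ∀ i, as i < bs i)
    (ha : Tendsto as atTop (𝓝 a)) (hb : Tendsto bs atTop (𝓝 b))
    (fs : ℕ → ℝ → ℝ)
    (hfsc : ∀ i, ContinuousOn (fs i) (Icc (as i) (bs i)))
    (hfs0 : ∀ i, fs i (as i) = 0 ∧ fs i (bs i) = 0)
    (hfspos : ∀ i, ∀ t ∈ Ioo (as i) (bs i), 0 < fs i t)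
    (hfsnorm : ∀ i, (∀ t ∈ Icc (as i) (bs i), fs i t ≤ 1) ∧
      ∃ t ∈ Icc (as i) (bs i), fs i t = 1)
    (hFKs : ∀ i, FKConcaveOn K (as i) (bs i) (fs i)) :
    (∀ t ∈ Ioo a b, DifferentiableAt ℝ (fun s => Real.log (f s)) t →
      |deriv (fun s => Real.log (f s)) t| ≤ max (cotK K (t - a)) (cotK K (b - t))) ∧
    ∃ φ : ℕ → ℕ, StrictMono φ ∧ ∃ fL : ℝ → ℝ,
      (∀ t ∈ Ioo a b, 0 < fL t) ∧ FKConcaveOn K a b fL ∧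
      ∀ J : Set ℝ, IsCompact J → J ⊆ Ioo a b →
        TendstoUniformlyOn (fun i => fs (φ i)) fL atTop J :=
  stmt_19_general K a b f hfc hfpos hFK as bs ha hb fs hfsc hfs0 hfspos hfsnorm hFKs
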